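/- Let n ≥ 4 be even, let Φ_J = [[cos(π/n), sin(π/n), 0], [−sin(π/n), cos(π/n), 0], [0, 0, 1]], and let ε ∈ (0,1]. There exist indices r, s ∈ {1,…,n} and indices i, j, k, l ∈ {1,…,n} such that the mixed state W_ε = ε·Φ_J + (1−ε)·ω_r ω_sᵀ satisfies Hardy's conditions with the measurements M₁ = (e_i, e_{i+n/2}), M₂ = (e_k, e_{k+n/2}) for Alice and N₁ = (e_j, e_{j+n/2}), N₂ = (e_l, e_{l+n/2}) for Bob: e_iᵀ W_ε e_l = 0, e_kᵀ W_ε e_j = 0, e_{k+n/2}ᵀ W_ε e_{l+n/2} = 0, and the success probability equals e_iᵀ W_ε e_j = ε·sin²(π/n) > 0. Thus for every ε ∈ (0,1] the (mixed, for ε < 1) state W_ε exhibits Hardy's nonlocality. -/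

import Mathlib

open Real Matrix

/-- `r_n = sqrt(sec(π/n))`. -/
noncomputable def rpoly (n : ℕ) : ℝ := Real.sqrt (1 / Real.cos (Real.pi / n))

/-- Extremal effects of the even `n`-gon model:
`e_i = (1/2)·(r_n cos((2i−1)π/n), r_n sin((2i−1)π/n), 1)ᵀ`. -/
noncomputable def eEven (n i : ℕ) : Fin 3 → ℝ :=
  (1 / 2 : ℝ) •
    ![rpoly n * Real.cos ((2 * (i : ℝ) - 1) * Real.pi / n),
      rpoly n * Real.sin ((2 * (i : ℝ) - 1) * Real.pi / n), 1]

/-- The maximally entangled state of the bipartite even `n`-gon model: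
`Φ_J = [[cos(π/n), sin(π/n), 0], [−sin(π/n), cos(π/n), 0], [0,0,1]]`. -/
noncomputable def PhiJ (n : ℕ) : Matrix (Fin 3) (Fin 3) ℝ :=
  !![Real.cos (Real.pi / n), Real.sin (Real.pi / n), 0;
     -Real.sin (Real.pi / n), Real.cos (Real.pi / n), 0;
     0, 0, 1]

/-- Probability of local effects `E` (Alice) and `F` (Bob) on a bipartite state `Φ`:
`P_Φ(E,F) = Eᵀ Φ F`. -/
noncomputable def prob (Φ : Matrix (Fin 3) (Fin 3) ℝ) (E F : Fin 3 → ℝ) : ℝ :=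
  E ⬝ᵥ Φ.mulVec F

/-- Pure states of the `n`-gon model: `ω_i = (r_n cos(2πi/n), r_n sin(2πi/n), 1)ᵀ`. -/
noncomputable def omegaP (n i : ℕ) : Fin 3 → ℝ :=
  ![rpoly n * Real.cos (2 * Real.pi * i / n), rpoly n * Real.sin (2 * Real.pi * i / n), 1]

lemma dotEO (n a b : ℕ) :
    eEven n a ⬝ᵥ omegaP n b
      = (1/2) * ((rpoly n)^2 * Real.cos ((2*(a:ℝ)-1)*Real.pi/n - 2*Real.pi*b/n) + 1) := by
  simp [eEven, omegaP, dotProduct, Fin.sum_univ_three, Real.cos_sub]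
  ring

lemma probPhiJ (n a b : ℕ) :
    prob (PhiJ n) (eEven n a) (eEven n b)
      = (1/4) * ((rpoly n)^2 *
          Real.cos ((2*(a:ℝ)-1)*Real.pi/n - (2*(b:ℝ)-1)*Real.pi/n + Real.pi/n) + 1) := by
  simp [prob, PhiJ, eEven, mulVec, dotProduct, Fin.sum_univ_three, Real.cos_sub,
    Real.cos_add, Real.sin_sub, Real.sin_add]
  ring

lemma probDecomp (A : Matrix (Fin 3) (Fin 3) ℝ) (u v E F : Fin 3 → ℝ) (a b : ℝ) :
    prob (a • A + b • vecMulVec u v) E F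
      = a * prob A E F + b * ((E ⬝ᵥ u) * (v ⬝ᵥ F)) := by
  simp [prob, mulVec, dotProduct, vecMulVec, Matrix.add_apply, Matrix.smul_apply,
    Fin.sum_univ_three]
  ring
open Real Matrix


/-- for even `n ≥ 4` and `ε ∈ (0,1]`, there are indices `r, s` and
`i, j, k, l ∈ {1,…,n}` such that the mixed state `W_ε = ε·Φ_J + (1−ε)·ω_r ω_sᵀ`
satisfies Hardy's conditions with the indicated extremal measurements, with success
probability `ε·sin²(π/n) > 0`. -/
theorem even_gon_mixed_state_hardy
    (n : ℕ) (hn : 4 ≤ n) (heven : Even n) (ε : ℝ) (hε : ε ∈ Set.Ioc (0 : ℝ) 1) :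
    ∃ r ∈ Finset.Icc 1 n, ∃ s ∈ Finset.Icc 1 n,
    ∃ i ∈ Finset.Icc 1 n, ∃ j ∈ Finset.Icc 1 n, ∃ k ∈ Finset.Icc 1 n, ∃ l ∈ Finset.Icc 1 n,
      prob (ε • PhiJ n + (1 - ε) • vecMulVec (omegaP n r) (omegaP n s))
        (eEven n i) (eEven n l) = 0 ∧
      prob (ε • PhiJ n + (1 - ε) • vecMulVec (omegaP n r) (omegaP n s))
        (eEven n k) (eEven n j) = 0 ∧
      prob (ε • PhiJ n + (1 - ε) • vecMulVec (omegaP n r) (omegaP n s))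
        (eEven n (k + n / 2)) (eEven n (l + n / 2)) = 0 ∧
      prob (ε • PhiJ n + (1 - ε) • vecMulVec (omegaP n r) (omegaP n s))
        (eEven n i) (eEven n j) = ε * Real.sin (Real.pi / n) ^ 2 ∧
      0 < ε * Real.sin (Real.pi / n) ^ 2 := by
  obtain ⟨m, rfl⟩ := heven
  have hm : 2 ≤ m := by omega
  have hhalf : (m + m) / 2 = m := by omega
  have hcast : ((m + m : ℕ) : ℝ) = (m : ℝ) + m := by push_cast; ring
  have hmR : (2 : ℝ) ≤ (m : ℝ) := by exact_mod_cast hm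
  have hApos : (0 : ℝ) < (m : ℝ) + m := by linarith
  have hAne : ((m : ℝ) + m) ≠ 0 := ne_of_gt hApos
  set α : ℝ := Real.pi / ((m : ℝ) + m) with hα
  have hπ := Real.pi_pos
  have hαpos : 0 < α := by positivity
  have hαlt : α < Real.pi / 2 := by
    rw [hα]
    apply div_lt_div_of_pos_left hπ (by norm_num) ?_
    linarith
  set c : ℝ := Real.cos α with hcdef
  set s : ℝ := Real.sin α with hsdef
  have hc : 0 < c := Real.cos_pos_of_mem_Ioo ⟨by linarith, hαlt⟩
  have hs : 0 < s := Real.sin_pos_of_pos_of_lt_pi hαpos (by linarith)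
  have hρ : (rpoly (m + m)) ^ 2 = 1 / c := by
    rw [rpoly, hcast, ← hα, ← hcdef]
    exact Real.sq_sqrt (by positivity)
  have hρc : (rpoly (m + m)) ^ 2 * c = 1 := by
    rw [hρ]; field_simp
  have hsc : s ^ 2 + c ^ 2 = 1 := Real.sin_sq_add_cos_sq α
  have hpa : Real.cos (Real.pi + α) = -c := by simp [Real.cos_add, hcdef]
  have hma : Real.cos (Real.pi - α) = -c := by simp [Real.cos_sub, hcdef]
  have hp3 : Real.cos (Real.pi + 3 * α) = -(4 * c ^ 3 - 3 * c) := by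
    rw [show Real.cos (Real.pi + 3 * α) = -Real.cos (3 * α) by simp [Real.cos_add],
      Real.cos_three_mul]
  have hz : (rpoly (m + m)) ^ 2 * -c + 1 = 0 := by linear_combination -hρc
  refine ⟨1, ?_, 1, ?_, m + 2, ?_, 1, ?_, m + 1, ?_, 2, ?_, ?_, ?_, ?_, ?_, ?_⟩
  · exact Finset.mem_Icc.mpr ⟨by omega, by omega⟩
  · exact Finset.mem_Icc.mpr ⟨by omega, by omega⟩
  · exact Finset.mem_Icc.mpr ⟨by omega, by omega⟩
  · exact Finset.mem_Icc.mpr ⟨by omega, by omega⟩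
  · exact Finset.mem_Icc.mpr ⟨by omega, by omega⟩
  · exact Finset.mem_Icc.mpr ⟨by omega, by omega⟩
  -- condition 1 : i = m+2, l = 2
  · rw [probDecomp, probPhiJ, dotEO]
    have k1 : Real.cos ((2*((m+2 : ℕ):ℝ)-1)*Real.pi/((m+m : ℕ):ℝ)
        - (2*((2 : ℕ):ℝ)-1)*Real.pi/((m+m : ℕ):ℝ) + Real.pi/((m+m : ℕ):ℝ)) = -c := by
      rw [show (2*((m+2 : ℕ):ℝ)-1)*Real.pi/((m+m : ℕ):ℝ)
          - (2*((2 : ℕ):ℝ)-1)*Real.pi/((m+m : ℕ):ℝ) + Real.pi/((m+m : ℕ):ℝ)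
          = Real.pi + α by rw [hcast, hα]; push_cast; field_simp; ring, hpa]
    have k2 : Real.cos ((2*((m+2 : ℕ):ℝ)-1)*Real.pi/((m+m : ℕ):ℝ)
        - 2*Real.pi*((1 : ℕ):ℝ)/((m+m : ℕ):ℝ)) = -c := by
      rw [show (2*((m+2 : ℕ):ℝ)-1)*Real.pi/((m+m : ℕ):ℝ)
          - 2*Real.pi*((1 : ℕ):ℝ)/((m+m : ℕ):ℝ)
          = Real.pi + α by rw [hcast, hα]; push_cast; field_simp; ring, hpa]
    rw [k1, k2, hz]
    ring
  -- condition 2 : k = m+1, j = 1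
  · rw [probDecomp, probPhiJ, dotEO]
    have k1 : Real.cos ((2*((m+1 : ℕ):ℝ)-1)*Real.pi/((m+m : ℕ):ℝ)
        - (2*((1 : ℕ):ℝ)-1)*Real.pi/((m+m : ℕ):ℝ) + Real.pi/((m+m : ℕ):ℝ)) = -c := by
      rw [show (2*((m+1 : ℕ):ℝ)-1)*Real.pi/((m+m : ℕ):ℝ)
          - (2*((1 : ℕ):ℝ)-1)*Real.pi/((m+m : ℕ):ℝ) + Real.pi/((m+m : ℕ):ℝ)
          = Real.pi + α by rw [hcast, hα]; push_cast; field_simp; ring, hpa]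
    have k2 : Real.cos ((2*((m+1 : ℕ):ℝ)-1)*Real.pi/((m+m : ℕ):ℝ)
        - 2*Real.pi*((1 : ℕ):ℝ)/((m+m : ℕ):ℝ)) = -c := by
      rw [show (2*((m+1 : ℕ):ℝ)-1)*Real.pi/((m+m : ℕ):ℝ)
          - 2*Real.pi*((1 : ℕ):ℝ)/((m+m : ℕ):ℝ)
          = Real.pi - α by rw [hcast, hα]; push_cast; field_simp; ring, hma]
    rw [k1, k2, hz]
    ring
  -- condition 3 : k + n/2 = m+1+m, l + n/2 = 2+m
  · rw [hhalf, probDecomp, probPhiJ,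
      dotProduct_comm (omegaP (m+m) 1) (eEven (m+m) (2 + m)), dotEO, dotEO]
    have k1 : Real.cos ((2*((m+1+m : ℕ):ℝ)-1)*Real.pi/((m+m : ℕ):ℝ)
        - (2*((2+m : ℕ):ℝ)-1)*Real.pi/((m+m : ℕ):ℝ) + Real.pi/((m+m : ℕ):ℝ)) = -c := by
      rw [show (2*((m+1+m : ℕ):ℝ)-1)*Real.pi/((m+m : ℕ):ℝ)
          - (2*((2+m : ℕ):ℝ)-1)*Real.pi/((m+m : ℕ):ℝ) + Real.pi/((m+m : ℕ):ℝ)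
          = Real.pi - α by rw [hcast, hα]; push_cast; field_simp; ring, hma]
    have k2 : Real.cos ((2*((2+m : ℕ):ℝ)-1)*Real.pi/((m+m : ℕ):ℝ)
        - 2*Real.pi*((1 : ℕ):ℝ)/((m+m : ℕ):ℝ)) = -c := by
      rw [show (2*((2+m : ℕ):ℝ)-1)*Real.pi/((m+m : ℕ):ℝ)
          - 2*Real.pi*((1 : ℕ):ℝ)/((m+m : ℕ):ℝ)
          = Real.pi + α by rw [hcast, hα]; push_cast; field_simp; ring, hpa]
    rw [k1, k2, hz]
    ring
  -- condition 4 : success probability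
  · rw [probDecomp, probPhiJ, dotEO]
    have k1 : Real.cos ((2*((m+2 : ℕ):ℝ)-1)*Real.pi/((m+m : ℕ):ℝ)
        - (2*((1 : ℕ):ℝ)-1)*Real.pi/((m+m : ℕ):ℝ) + Real.pi/((m+m : ℕ):ℝ))
        = -(4 * c ^ 3 - 3 * c) := by
      rw [show (2*((m+2 : ℕ):ℝ)-1)*Real.pi/((m+m : ℕ):ℝ)
          - (2*((1 : ℕ):ℝ)-1)*Real.pi/((m+m : ℕ):ℝ) + Real.pi/((m+m : ℕ):ℝ)
          = Real.pi + 3 * α by rw [hcast, hα]; push_cast; field_simp; ring, hp3]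
    have k2 : Real.cos ((2*((m+2 : ℕ):ℝ)-1)*Real.pi/((m+m : ℕ):ℝ)
        - 2*Real.pi*((1 : ℕ):ℝ)/((m+m : ℕ):ℝ)) = -c := by
      rw [show (2*((m+2 : ℕ):ℝ)-1)*Real.pi/((m+m : ℕ):ℝ)
          - 2*Real.pi*((1 : ℕ):ℝ)/((m+m : ℕ):ℝ)
          = Real.pi + α by rw [hcast, hα]; push_cast; field_simp; ring, hpa]
    have hsin : Real.sin (Real.pi / ((m+m : ℕ):ℝ)) = s := by rw [hcast, ← hα, hsdef]
    rw [k1, k2, hz, hsin]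
    have hval : (1/4 : ℝ) * ((rpoly (m+m))^2 * -(4 * c ^ 3 - 3 * c) + 1) = s ^ 2 := by
      rw [hρ]
      field_simp
      linear_combination (-4) * hsc
    rw [hval]
    ring
  -- positivity
  · have hsin : Real.sin (Real.pi / ((m+m : ℕ):ℝ)) = s := by rw [hcast, ← hα, hsdef]
    rw [hsin]
    exact mul_pos hε.1 (pow_pos hs 2)
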